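/- arXiv:2301.00586 — 2 statements merged into one kernel-verified Lean document; each statement's English description precedes it below -/
import Mathlib

section
/- The Jacobi operator (T, D(T)) associated with an indeterminate moment problem is regular: for every z ∈ ℂ there exists d(z) > 0 such that ‖Tc − z·c‖ ≥ d(z)·‖c‖ for all c ∈ D(T). -/
open Filter Topology MeasureTheory

noncomputable section

/-- Action of the Jacobi matrix `J` on a complex sequence:
`(Jc)ₙ = aₙ₋₁cₙ₋₁ + bₙcₙ + aₙcₙ₊₁` with `a₋₁ := 0`. -/
def jacobiMul (a b : ℕ → ℝ) (c : ℕ → ℂ) : ℕ → ℂ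
  | 0 => (b 0 : ℂ) * c 0 + (a 0 : ℂ) * c 1
  | n + 1 => (a n : ℂ) * c n + (b (n + 1) : ℂ) * c (n + 1) + (a (n + 1) : ℂ) * c (n + 2)

/-- `jacobiGraph a b f g` means: `f` belongs to the domain `D(T)` of the closure `T` of the
Jacobi matrix acting on the finitely supported sequences, and `T f = g`; i.e. there are
finitely supported sequences `u k → f` in `ℓ²` such that `J (u k) → g` in `ℓ²`. -/
def jacobiGraph (a b : ℕ → ℝ) (f g : ℕ → ℂ) : Prop :=
  ∃ u : ℕ → ℕ → ℂ,
    (∀ k, (Function.support (u k)).Finite) ∧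
    (∀ k, Summable fun n => ‖u k n - f n‖ ^ 2) ∧
    Tendsto (fun k => ∑' n, ‖u k n - f n‖ ^ 2) atTop (𝓝 0) ∧
    (∀ k, Summable fun n => ‖jacobiMul a b (u k) n - g n‖ ^ 2) ∧
    Tendsto (fun k => ∑' n, ‖jacobiMul a b (u k) n - g n‖ ^ 2) atTop (𝓝 0)

/-- Membership in the domain `D(T)` of the Jacobi operator. -/
def inDomT (a b : ℕ → ℝ) (f : ℕ → ℂ) : Prop := ∃ g, jacobiGraph a b f g

/-- The `ℓ²` norm of a complex sequence. -/
def l2norm (f : ℕ → ℂ) : ℝ := Real.sqrt (∑' n, ‖f n‖ ^ 2)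

/-- The data of an indeterminate Hamburger moment problem: Jacobi parameters `a`, `b`,
the orthonormal polynomials `p` and second-kind polynomials `q` (as entire functions),
determined by the three-term recurrence, together with the indeterminacy condition
`∑ₙ (|pₙ(z)|² + |qₙ(z)|²) < ∞` for all `z`. -/
structure JacobiSetup where
  a : ℕ → ℝ
  b : ℕ → ℝ
  ha : ∀ n, 0 < a n
  p : ℕ → ℂ → ℂ
  q : ℕ → ℂ → ℂ
  hp0 : ∀ z, p 0 z = 1
  hp1 : ∀ z, p 1 z = (z - (b 0 : ℂ)) / (a 0 : ℂ)
  hq0 : ∀ z, q 0 z = 0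
  hq1 : ∀ z, q 1 z = 1 / (a 0 : ℂ)
  hrecp : ∀ n z, z * p (n + 1) z =
    (a (n + 1) : ℂ) * p (n + 2) z + (b (n + 1) : ℂ) * p (n + 1) z + (a n : ℂ) * p n z
  hrecq : ∀ n z, z * q (n + 1) z =
    (a (n + 1) : ℂ) * q (n + 2) z + (b (n + 1) : ℂ) * q (n + 1) z + (a n : ℂ) * q n z
  indet : ∀ z : ℂ, Summable fun n => ‖p n z‖ ^ 2 + ‖q n z‖ ^ 2

/-- The Nevanlinna function `A(u,v)`. -/
def nevA (S : JacobiSetup) (u v : ℂ) : ℂ := (u - v) * ∑' k, S.q k u * S.q k v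
/-- The Nevanlinna function `B(u,v)`. -/
def nevB (S : JacobiSetup) (u v : ℂ) : ℂ := -1 + (u - v) * ∑' k, S.p k u * S.q k v
/-- The Nevanlinna function `C(u,v)`. -/
def nevC (S : JacobiSetup) (u v : ℂ) : ℂ := 1 + (u - v) * ∑' k, S.q k u * S.p k v
/-- The Nevanlinna function `D(u,v)`. -/
def nevD (S : JacobiSetup) (u v : ℂ) : ℂ := (u - v) * ∑' k, S.p k u * S.p k v

/-!
For finitely supported `u` put `w = (J - z) u`. Summing `(Ju)ₘ dₘ - uₘ (Jd)ₘ` by parts against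
the Green kernel `G(n, m) = p_{min(n,m)}(z) q_{max(n,m)}(z)`, which solves `(J - z) G(n, ·) = δₙ`
by the recurrences and the Wronskian identity `aₘ (pₘ qₘ₊₁ - pₘ₊₁ qₘ) = 1`, gives
`uₙ = ∑ₘ G(n, m) wₘ`. As `|G(n, m)|² ≤ ρₙ ρₘ` with `ρₙ = |pₙ(z)|² + |qₙ(z)|²`, Cauchy–Schwarz
yields `‖u‖ ≤ (∑ ρₙ) ‖w‖`; indeterminacy makes `∑ ρₙ` finite, and `∑ ρₙ ≥ ρ₀ = 1`. The bound
passes to the closure `T` by continuity of the norm.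
-/

section SquareSummable

variable {ι : Type*} {E : ι → Type*} [∀ i, NormedAddCommGroup (E i)]

lemma memℓp_two_iff_summable_sq {f : ∀ i, E i} : Memℓp f 2 ↔ Summable fun i => ‖f i‖ ^ 2 := by
  rw [memℓp_gen_iff (by norm_num)]
  norm_num [Real.rpow_two]

lemma lp.norm_two_eq_sqrt_tsum (f : lp E 2) : ‖f‖ = √(∑' i, ‖f i‖ ^ 2) := by
  rw [lp.norm_eq_tsum_rpow (by norm_num), Real.sqrt_eq_rpow]
  norm_num [Real.rpow_two]

lemma memℓp_of_forall_ge_eq_zero {F : Type*} [NormedAddCommGroup F] {c : ℕ → F} {N : ℕ}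
    (hc : ∀ m, N ≤ m → c m = 0) (p : ENNReal) : Memℓp c p := by
  refine (memℓp_zero ((Set.finite_Iio N).subset fun m hm => ?_)).of_exponent_ge zero_le
  by_contra hmN
  exact hm (hc m (not_lt.1 hmN))

end SquareSummable

lemma l2norm_eq_norm_lp (f : lp (fun _ : ℕ => ℂ) 2) : l2norm f = ‖f‖ :=
  (lp.norm_two_eq_sqrt_tsum f).symm

lemma l2norm_sub_smul_eq_norm (F G : lp (fun _ : ℕ => ℂ) 2) (z : ℂ) :
    (l2norm fun n => G n - z * F n) = ‖G - z • F‖ := by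
  rw [← l2norm_eq_norm_lp]
  rfl

lemma exists_memℓp_tendsto_of_tsum_sq_sub {u : ℕ → ℕ → ℂ} {f : ℕ → ℂ}
    (hu : ∀ k, Memℓp (u k) 2) (hsum : ∀ k, Summable fun n => ‖u k n - f n‖ ^ 2)
    (hlim : Tendsto (fun k => ∑' n, ‖u k n - f n‖ ^ 2) atTop (𝓝 0)) :
    ∃ hf : Memℓp f 2,
      Tendsto (fun k => (⟨u k, hu k⟩ : lp (fun _ : ℕ => ℂ) 2)) atTop (𝓝 ⟨f, hf⟩) := by
  have hf : Memℓp f 2 := by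
    have hdiff : Memℓp (u 0 - f) 2 := memℓp_two_iff_summable_sq.2 (hsum 0)
    simpa using (hu 0).sub hdiff
  refine ⟨hf, tendsto_iff_norm_sub_tendsto_zero.2 ?_⟩
  have hnorm (k : ℕ) : ‖(⟨u k, hu k⟩ - ⟨f, hf⟩ : lp (fun _ : ℕ => ℂ) 2)‖ =
      √(∑' n, ‖u k n - f n‖ ^ 2) :=
    lp.norm_two_eq_sqrt_tsum _
  simpa only [hnorm, Real.sqrt_zero, Function.comp_def] using
    (Real.continuous_sqrt.tendsto 0).comp hlim

section JacobiMatrix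

variable (a b : ℕ → ℝ)

lemma jacobiMul_zero (c : ℕ → ℂ) : jacobiMul a b c 0 = (b 0 : ℂ) * c 0 + (a 0 : ℂ) * c 1 := rfl

lemma jacobiMul_succ (c : ℕ → ℂ) (n : ℕ) :
    jacobiMul a b c (n + 1) =
      (a n : ℂ) * c n + (b (n + 1) : ℂ) * c (n + 1) + (a (n + 1) : ℂ) * c (n + 2) := rfl

lemma jacobiMul_eq_zero_of_forall_ge {c : ℕ → ℂ} {N : ℕ} (hc : ∀ m, N ≤ m → c m = 0) :
    ∀ m, N + 1 ≤ m → jacobiMul a b c m = 0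
  | k + 1, hk => by
    rw [jacobiMul_succ, hc k (by omega), hc (k + 1) (by omega), hc (k + 2) (by omega)]
    ring

lemma sum_range_jacobiMul_mul_sub (c d : ℕ → ℂ) (M : ℕ) :
    ∑ m ∈ Finset.range (M + 1), (jacobiMul a b c m * d m - c m * jacobiMul a b d m) =
      (a M : ℂ) * (c (M + 1) * d M - c M * d (M + 1)) := by
  induction M with
  | zero => simp only [zero_add, Finset.sum_range_one, jacobiMul_zero]; ring
  | succ M ih => rw [Finset.sum_range_succ, ih, jacobiMul_succ, jacobiMul_succ]; ring

end JacobiMatrix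

namespace JacobiSetup

variable (S : JacobiSetup) (z : ℂ)

lemma wronskian (m : ℕ) :
    (S.a m : ℂ) * (S.p m z * S.q (m + 1) z - S.p (m + 1) z * S.q m z) = 1 := by
  induction m with
  | zero =>
    have ha0 : (S.a 0 : ℂ) ≠ 0 := by exact_mod_cast (S.ha 0).ne'
    rw [S.hp0, S.hq1, S.hq0]
    field_simp
    ring
  | succ m ih =>
    linear_combination ih + S.q (m + 1) z * S.hrecp m z - S.p (m + 1) z * S.hrecq m z

def green (n m : ℕ) : ℂ := S.p (min n m) z * S.q (max n m) z

lemma green_of_le {n m : ℕ} (h : n ≤ m) : S.green z n m = S.p n z * S.q m z := by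
  rw [green, min_eq_left h, max_eq_right h]

lemma green_of_ge {n m : ℕ} (h : m ≤ n) : S.green z n m = S.p m z * S.q n z := by
  rw [green, min_eq_right h, max_eq_left h]

lemma jacobiMul_green_sub (n m : ℕ) :
    jacobiMul S.a S.b (S.green z n) m - z * S.green z n m = if n = m then 1 else 0 := by
  have ha0 : (S.a 0 : ℂ) ≠ 0 := by exact_mod_cast (S.ha 0).ne'
  cases m with
  | zero =>
    rw [jacobiMul_zero]
    rcases Nat.eq_zero_or_pos n with rfl | hn
    · rw [S.green_of_le z le_rfl, S.green_of_le z zero_le_one, S.hp0, S.hq0, S.hq1, if_pos rfl]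
      field_simp
      ring
    · rw [S.green_of_ge z hn.le, S.green_of_ge z hn, S.hp0, S.hp1, if_neg hn.ne']
      field_simp
      ring
  | succ m =>
    rw [jacobiMul_succ]
    rcases lt_trichotomy n (m + 1) with hlt | rfl | hgt
    · rw [S.green_of_le z (by omega : n ≤ m), S.green_of_le z hlt.le,
        S.green_of_le z (by omega : n ≤ m + 2), if_neg hlt.ne]
      linear_combination -S.p n z * S.hrecq m z
    · rw [S.green_of_ge z (by omega : m ≤ m + 1), S.green_of_le z le_rfl,
        S.green_of_le z (by omega : m + 1 ≤ m + 2), if_pos rfl]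
      linear_combination S.wronskian z m - S.p (m + 1) z * S.hrecq m z
    · rw [S.green_of_ge z (by omega : m ≤ n), S.green_of_ge z hgt.le,
        S.green_of_ge z (by omega : m + 2 ≤ n), if_neg hgt.ne']
      linear_combination -S.q n z * S.hrecp m z

lemma eq_sum_green_mul {u : ℕ → ℂ} {M n : ℕ} (hu : ∀ m, M ≤ m → u m = 0) (hn : n ≤ M) :
    u n = ∑ m ∈ Finset.range (M + 1),
      S.green z n m * (jacobiMul S.a S.b u m - z * u m) := by
  have hboundary := sum_range_jacobiMul_mul_sub S.a S.b u (S.green z n) M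
  rw [hu M le_rfl, hu (M + 1) (by omega)] at hboundary
  simp only [zero_mul, sub_self, mul_zero] at hboundary
  calc u n = ∑ m ∈ Finset.range (M + 1), u m * (if n = m then 1 else 0) := by
        simp [Finset.mem_range, Nat.lt_succ_of_le hn]
    _ = ∑ m ∈ Finset.range (M + 1),
          u m * (jacobiMul S.a S.b (S.green z n) m - z * S.green z n m) := by
        simp only [jacobiMul_green_sub]
    _ = ∑ m ∈ Finset.range (M + 1), S.green z n m * (jacobiMul S.a S.b u m - z * u m) -
          ∑ m ∈ Finset.range (M + 1),
            (jacobiMul S.a S.b u m * S.green z n m - u m * jacobiMul S.a S.b (S.green z n) m) := by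
        rw [← Finset.sum_sub_distrib]
        exact Finset.sum_congr rfl fun m _ => by ring
    _ = _ := by rw [hboundary, sub_zero]

def weight (n : ℕ) : ℝ := ‖S.p n z‖ ^ 2 + ‖S.q n z‖ ^ 2

lemma weight_nonneg (n : ℕ) : 0 ≤ S.weight z n := by unfold weight; positivity

lemma one_le_tsum_weight : 1 ≤ ∑' n, S.weight z n := by
  have h0 : S.weight z 0 = 1 := by simp [weight, S.hp0, S.hq0]
  exact h0 ▸ (S.indet z).le_tsum 0 fun n _ => S.weight_nonneg z n

lemma norm_green_sq_le (n m : ℕ) : ‖S.green z n m‖ ^ 2 ≤ S.weight z n * S.weight z m := by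
  have hp_le (k) : ‖S.p k z‖ ^ 2 ≤ S.weight z k := le_add_of_nonneg_right (by positivity)
  have hq_le (k) : ‖S.q k z‖ ^ 2 ≤ S.weight z k := le_add_of_nonneg_left (by positivity)
  rcases le_total n m with h | h
  · rw [S.green_of_le z h, norm_mul, mul_pow]
    exact mul_le_mul (hp_le n) (hq_le m) (by positivity) (S.weight_nonneg z n)
  · rw [S.green_of_ge z h, norm_mul, mul_pow, mul_comm (S.weight z n)]
    exact mul_le_mul (hp_le m) (hq_le n) (by positivity) (S.weight_nonneg z m)

lemma norm_sq_le_weight_mul {u : ℕ → ℂ} {N : ℕ} (hu : ∀ m, N ≤ m → u m = 0) (n : ℕ) :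
    ‖u n‖ ^ 2 ≤ S.weight z n *
      ((∑' m, S.weight z m) * ∑' m, ‖jacobiMul S.a S.b u m - z * u m‖ ^ 2) := by
  set w := fun m => jacobiMul S.a S.b u m - z * u m
  set s := Finset.range (max N n + 1)
  have hw : Summable fun m => ‖w m‖ ^ 2 := memℓp_two_iff_summable_sq.1 <|
    memℓp_of_forall_ge_eq_zero (N := N + 1) (fun m hm => by
      simp [w, jacobiMul_eq_zero_of_forall_ge S.a S.b hu m hm, hu m (by omega)]) 2
  calc ‖u n‖ ^ 2 = ‖∑ m ∈ s, S.green z n m * w m‖ ^ 2 := by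
        rw [← S.eq_sum_green_mul z (fun m hm => hu m (le_of_max_le_left hm)) (le_max_right N n)]
    _ ≤ (∑ m ∈ s, ‖S.green z n m‖ * ‖w m‖) ^ 2 := by
        gcongr
        exact (norm_sum_le _ _).trans_eq (Finset.sum_congr rfl fun m _ => norm_mul _ _)
    _ ≤ (∑ m ∈ s, ‖S.green z n m‖ ^ 2) * ∑ m ∈ s, ‖w m‖ ^ 2 :=
        Finset.sum_mul_sq_le_sq_mul_sq _ _ _
    _ ≤ (∑ m ∈ s, S.weight z n * S.weight z m) * ∑' m, ‖w m‖ ^ 2 := by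
        refine mul_le_mul (Finset.sum_le_sum fun m _ => S.norm_green_sq_le z n m)
          (hw.sum_le_tsum s fun m _ => by positivity) (by positivity)
          (Finset.sum_nonneg fun m _ => mul_nonneg (S.weight_nonneg z n) (S.weight_nonneg z m))
    _ ≤ (S.weight z n * ∑' m, S.weight z m) * ∑' m, ‖w m‖ ^ 2 := by
        rw [← Finset.mul_sum]
        gcongr
        · exact S.weight_nonneg z n
        · exact (S.indet z).sum_le_tsum s fun m _ => S.weight_nonneg z m
    _ = _ := by ring

lemma l2norm_le_tsum_weight_mul {u : ℕ → ℂ} {N : ℕ} (hu : ∀ m, N ≤ m → u m = 0) :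
    l2norm u ≤ (∑' n, S.weight z n) * l2norm fun n => jacobiMul S.a S.b u n - z * u n := by
  set C := ∑' n, S.weight z n
  have hC : 0 ≤ C := tsum_nonneg (S.weight_nonneg z)
  have hsq : ∑' n, ‖u n‖ ^ 2 ≤ C ^ 2 * ∑' n, ‖jacobiMul S.a S.b u n - z * u n‖ ^ 2 :=
    calc ∑' n, ‖u n‖ ^ 2
        ≤ ∑' n, S.weight z n * (C * ∑' m, ‖jacobiMul S.a S.b u m - z * u m‖ ^ 2) :=
          (memℓp_two_iff_summable_sq.1 (memℓp_of_forall_ge_eq_zero hu 2)).tsum_le_tsum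
            (S.norm_sq_le_weight_mul z hu) ((S.indet z).mul_right _)
      _ = C ^ 2 * ∑' n, ‖jacobiMul S.a S.b u n - z * u n‖ ^ 2 := by rw [tsum_mul_right]; ring
  unfold l2norm
  rw [← Real.sqrt_sq hC, ← Real.sqrt_mul (sq_nonneg C)]
  exact Real.sqrt_le_sqrt hsq

end JacobiSetup

lemma jacobiGraph.l2norm_le {a b : ℕ → ℝ} {z : ℂ} {C : ℝ}
    (hC : ∀ (u : ℕ → ℂ) (N : ℕ), (∀ m, N ≤ m → u m = 0) →
      l2norm u ≤ C * l2norm fun n => jacobiMul a b u n - z * u n)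
    {f g : ℕ → ℂ} (hfg : jacobiGraph a b f g) : l2norm f ≤ C * l2norm fun n => g n - z * f n := by
  obtain ⟨u, hfin, husum, hulim, hJsum, hJlim⟩ := hfg
  have hbound (k : ℕ) : ∃ N, ∀ m, N ≤ m → u k m = 0 := by
    obtain ⟨N, hN⟩ := (hfin k).bddAbove
    exact ⟨N + 1, fun m hm => Function.notMem_support.1 fun hm' => by linarith [hN hm']⟩
  choose N hN using hbound
  have hu (k) := memℓp_of_forall_ge_eq_zero (hN k) 2
  have hJu (k) := memℓp_of_forall_ge_eq_zero (jacobiMul_eq_zero_of_forall_ge a b (hN k)) 2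
  obtain ⟨hf, hUF⟩ := exists_memℓp_tendsto_of_tsum_sq_sub hu husum hulim
  obtain ⟨hg, hJG⟩ := exists_memℓp_tendsto_of_tsum_sq_sub hJu hJsum hJlim
  have hlim := ((hJG.sub (hUF.const_smul z)).norm).const_mul C
  have hf_norm : l2norm f = ‖(⟨f, hf⟩ : lp (fun _ : ℕ => ℂ) 2)‖ :=
    l2norm_eq_norm_lp (⟨f, hf⟩ : lp (fun _ : ℕ => ℂ) 2)
  have hgf_norm : (l2norm fun n => g n - z * f n) =
      ‖(⟨g, hg⟩ - z • ⟨f, hf⟩ : lp (fun _ : ℕ => ℂ) 2)‖ :=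
    l2norm_sub_smul_eq_norm ⟨f, hf⟩ ⟨g, hg⟩ z
  rw [hf_norm, hgf_norm]
  refine le_of_tendsto_of_tendsto' hUF.norm hlim fun k => ?_
  rw [← l2norm_eq_norm_lp, ← l2norm_sub_smul_eq_norm]
  exact hC (u k) (N k) (hN k)

/-- The Jacobi operator of an indeterminate moment problem is regular: for every `z ∈ ℂ`
there is `d(z) > 0` with `‖Tc − zc‖ ≥ d(z)‖c‖` for all `c ∈ D(T)`. -/
theorem stmt13 (S : JacobiSetup) (z : ℂ) :
    ∃ d : ℝ, 0 < d ∧ ∀ f g : ℕ → ℂ, jacobiGraph S.a S.b f g →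
      d * l2norm f ≤ l2norm fun n => g n - z * f n := by
  have hpos : 0 < ∑' n, S.weight z n := zero_lt_one.trans_le (S.one_le_tsum_weight z)
  refine ⟨(∑' n, S.weight z n)⁻¹, inv_pos.2 hpos, fun f g hfg => ?_⟩
  rw [inv_mul_le_iff₀ hpos]
  exact hfg.l2norm_le fun u N hu => S.l2norm_le_tsum_weight_mul z hu
end
end

section
/- For all u, v, w ∈ ℂ the Nevanlinna functions satisfy: A(u,v) = C(u,w)A(w,v) − A(u,w)B(w,v); B(u,v) = D(u,w)A(w,v) − B(u,w)B(w,v); C(u,v) = C(u,w)C(w,v) − A(u,w)D(w,v); D(u,v) = D(u,w)C(w,v) − B(u,w)D(w,v). -/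
open Filter Topology MeasureTheory

noncomputable section

/-!
Every Nevanlinna function is the limit of a Wronskian
`Wₙ(r, s) = aₙ (rₙ₊₁(x) sₙ(y) − rₙ(x) sₙ₊₁(y))` of two of the solutions `p`, `q` of the
recurrence: by the Christoffel–Darboux (Green) formula, `(x − y) ∑_{k ≤ n} rₖ(x) sₖ(y)` differs
from `Wₙ(r, s)` only by boundary terms coming from the first row. At a fixed `n`, the pair
`(p(w), q(w))` has Wronskian `−1`, so the Plücker relation for `2 × 2` determinants expresses
`Wₙ(r, s)` through Wronskians against `p(w)` and `q(w)`. Letting `n → ∞` gives the identities.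
-/

lemma summable_mul_of_summable_norm_sq {ι R : Type*} [NormedRing R] [CompleteSpace R]
    {f g : ι → R} (hf : Summable fun i => ‖f i‖ ^ 2) (hg : Summable fun i => ‖g i‖ ^ 2) :
    Summable fun i => f i * g i := by
  refine Summable.of_norm_bounded (hf.add hg) fun i => ?_
  calc ‖f i * g i‖ ≤ ‖f i‖ * ‖g i‖ := norm_mul_le _ _
    _ ≤ ‖f i‖ ^ 2 + ‖g i‖ ^ 2 := by
      nlinarith [two_mul_le_add_sq ‖f i‖ ‖g i‖, norm_nonneg (f i), norm_nonneg (g i)]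

namespace JacobiSetup

variable (S : JacobiSetup)

/-- `c` solves the recurrence `z cₙ = aₙ cₙ₊₁ + bₙ cₙ + aₙ₋₁ cₙ₋₁` for `n ≥ 1`, and the first row
`z c₀ = b₀ c₀ + a₀ c₁` up to the defect `e`; `p` has defect `0` and `q` has defect `−1`. -/
def SolvesRecurrence (z e : ℂ) (c : ℕ → ℂ) : Prop :=
  z * c 0 = (S.b 0 : ℂ) * c 0 + (S.a 0 : ℂ) * c 1 + e ∧
  ∀ n, z * c (n + 1) =
    (S.a (n + 1) : ℂ) * c (n + 2) + (S.b (n + 1) : ℂ) * c (n + 1) + (S.a n : ℂ) * c n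

def wronskian_s17 (c d : ℕ → ℂ) (n : ℕ) : ℂ :=
  (S.a n : ℂ) * (c (n + 1) * d n - c n * d (n + 1))

lemma a_zero_ne_zero : (S.a 0 : ℂ) ≠ 0 := Complex.ofReal_ne_zero.mpr (S.ha 0).ne'

lemma solvesRecurrence_p (z : ℂ) : S.SolvesRecurrence z 0 (S.p · z) := by
  refine ⟨?_, fun n => S.hrecp n z⟩
  have := S.a_zero_ne_zero
  simp only [S.hp0, S.hp1]
  field_simp
  ring

lemma solvesRecurrence_q (z : ℂ) : S.SolvesRecurrence z (-1) (S.q · z) := by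
  refine ⟨?_, fun n => S.hrecq n z⟩
  have := S.a_zero_ne_zero
  simp only [S.hq0, S.hq1]
  field_simp
  ring

variable {S}

lemma sub_mul_sum_range_eq_wronskian {u v e f : ℂ} {c d : ℕ → ℂ}
    (hc : S.SolvesRecurrence u e c) (hd : S.SolvesRecurrence v f d) (n : ℕ) :
    (u - v) * ∑ k ∈ Finset.range (n + 1), c k * d k = S.wronskian_s17 c d n + e * d 0 - f * c 0 := by
  induction n with
  | zero =>
    simp only [zero_add, Finset.sum_range_one, wronskian_s17]
    linear_combination d 0 * hc.1 - c 0 * hd.1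
  | succ n ih =>
    rw [Finset.sum_range_succ, mul_add, ih]
    simp only [wronskian_s17]
    linear_combination d (n + 1) * hc.2 n - c (n + 1) * hd.2 n

lemma tendsto_wronskian {u v e f : ℂ} {c d : ℕ → ℂ}
    (hc : S.SolvesRecurrence u e c) (hd : S.SolvesRecurrence v f d)
    (hsum : Summable fun k => c k * d k) :
    Tendsto (S.wronskian_s17 c d) atTop (𝓝 ((u - v) * ∑' k, c k * d k - e * d 0 + f * c 0)) := by
  have hpartial : Tendsto (fun n => (u - v) * ∑ k ∈ Finset.range (n + 1), c k * d k) atTop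
      (𝓝 ((u - v) * ∑' k, c k * d k)) :=
    (hsum.hasSum.tendsto_sum_nat.comp (tendsto_add_atTop_nat 1)).const_mul _
  refine ((hpartial.sub_const _).add_const _).congr fun n => ?_
  rw [sub_mul_sum_range_eq_wronskian hc hd]
  ring

variable (S)

lemma wronskian_p_q (w : ℂ) (n : ℕ) : S.wronskian_s17 (S.p · w) (S.q · w) n = -1 := by
  have h := sub_mul_sum_range_eq_wronskian (S.solvesRecurrence_p w) (S.solvesRecurrence_q w) n
  simp only [sub_self, zero_mul, S.hp0, S.hq0] at h
  linear_combination -h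

lemma wronskian_eq_sub (c d : ℕ → ℂ) (w : ℂ) (n : ℕ) :
    S.wronskian_s17 c d n =
      S.wronskian_s17 c (S.p · w) n * S.wronskian_s17 (S.q · w) d n
        - S.wronskian_s17 c (S.q · w) n * S.wronskian_s17 (S.p · w) d n := by
  have h := S.wronskian_p_q w n
  simp only [wronskian_s17] at h ⊢
  linear_combination (S.a n * (c (n + 1) * d n - c n * d (n + 1))) * h

lemma summable_norm_p_sq (z : ℂ) : Summable fun n => ‖S.p n z‖ ^ 2 :=
  (S.indet z).of_nonneg_of_le (fun _ => by positivity) fun _ =>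
    le_add_of_nonneg_right (by positivity)

lemma summable_norm_q_sq (z : ℂ) : Summable fun n => ‖S.q n z‖ ^ 2 :=
  (S.indet z).of_nonneg_of_le (fun _ => by positivity) fun _ =>
    le_add_of_nonneg_left (by positivity)

lemma tendsto_wronskian_nevA (x y : ℂ) :
    Tendsto (S.wronskian_s17 (S.q · x) (S.q · y)) atTop (𝓝 (nevA S x y)) := by
  simpa [nevA, S.hq0] using tendsto_wronskian (S.solvesRecurrence_q x) (S.solvesRecurrence_q y)
    (summable_mul_of_summable_norm_sq (S.summable_norm_q_sq x) (S.summable_norm_q_sq y))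

lemma tendsto_wronskian_nevB (x y : ℂ) :
    Tendsto (S.wronskian_s17 (S.p · x) (S.q · y)) atTop (𝓝 (nevB S x y)) := by
  simpa [nevB, S.hp0, add_comm] using
    tendsto_wronskian (S.solvesRecurrence_p x) (S.solvesRecurrence_q y)
      (summable_mul_of_summable_norm_sq (S.summable_norm_p_sq x) (S.summable_norm_q_sq y))

lemma tendsto_wronskian_nevC (x y : ℂ) :
    Tendsto (S.wronskian_s17 (S.q · x) (S.p · y)) atTop (𝓝 (nevC S x y)) := by
  simpa [nevC, S.hp0, add_comm] using
    tendsto_wronskian (S.solvesRecurrence_q x) (S.solvesRecurrence_p y)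
      (summable_mul_of_summable_norm_sq (S.summable_norm_q_sq x) (S.summable_norm_p_sq y))

lemma tendsto_wronskian_nevD (x y : ℂ) :
    Tendsto (S.wronskian_s17 (S.p · x) (S.p · y)) atTop (𝓝 (nevD S x y)) := by
  simpa [nevD] using tendsto_wronskian (S.solvesRecurrence_p x) (S.solvesRecurrence_p y)
    (summable_mul_of_summable_norm_sq (S.summable_norm_p_sq x) (S.summable_norm_p_sq y))

lemma eq_sub_of_tendsto_wronskian {c d : ℕ → ℂ} {w L X Y Z T : ℂ}
    (h : Tendsto (S.wronskian_s17 c d) atTop (𝓝 L))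
    (hcp : Tendsto (S.wronskian_s17 c (S.p · w)) atTop (𝓝 X))
    (hqd : Tendsto (S.wronskian_s17 (S.q · w) d) atTop (𝓝 Y))
    (hcq : Tendsto (S.wronskian_s17 c (S.q · w)) atTop (𝓝 Z))
    (hpd : Tendsto (S.wronskian_s17 (S.p · w) d) atTop (𝓝 T)) :
    L = X * Y - Z * T :=
  tendsto_nhds_unique h <|
    ((hcp.mul hqd).sub (hcq.mul hpd)).congr fun n => (S.wronskian_eq_sub c d w n).symm

end JacobiSetup

/-- The three-point identities for the Nevanlinna functions. -/
theorem stmt17 (S : JacobiSetup) (u v w : ℂ) :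
    nevA S u v = nevC S u w * nevA S w v - nevA S u w * nevB S w v ∧
    nevB S u v = nevD S u w * nevA S w v - nevB S u w * nevB S w v ∧
    nevC S u v = nevC S u w * nevC S w v - nevA S u w * nevD S w v ∧
    nevD S u v = nevD S u w * nevC S w v - nevB S u w * nevD S w v :=
  ⟨S.eq_sub_of_tendsto_wronskian (S.tendsto_wronskian_nevA u v) (S.tendsto_wronskian_nevC u w)
      (S.tendsto_wronskian_nevA w v) (S.tendsto_wronskian_nevA u w) (S.tendsto_wronskian_nevB w v),
    S.eq_sub_of_tendsto_wronskian (S.tendsto_wronskian_nevB u v) (S.tendsto_wronskian_nevD u w)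
      (S.tendsto_wronskian_nevA w v) (S.tendsto_wronskian_nevB u w) (S.tendsto_wronskian_nevB w v),
    S.eq_sub_of_tendsto_wronskian (S.tendsto_wronskian_nevC u v) (S.tendsto_wronskian_nevC u w)
      (S.tendsto_wronskian_nevC w v) (S.tendsto_wronskian_nevA u w) (S.tendsto_wronskian_nevD w v),
    S.eq_sub_of_tendsto_wronskian (S.tendsto_wronskian_nevD u v) (S.tendsto_wronskian_nevD u w)
      (S.tendsto_wronskian_nevC w v) (S.tendsto_wronskian_nevB u w) (S.tendsto_wronskian_nevD w v)⟩
end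
end
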